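/- arXiv:1811.10189 — 2 statements merged into one kernel-verified Lean document; each statement's English description precedes it below -/
import Mathlib

section
/- Relaxation squeezes the weights: for all 0 < ϑ₁ ≤ ϑ₂, the largest relaxed normalized weight is nonincreasing and the smallest is nondecreasing in the scale parameter, i.e. max_{1≤i≤N} w_i(ϑ₂) ≤ max_{1≤i≤N} w_i(ϑ₁) and min_{1≤i≤N} w_i(ϑ₁) ≤ min_{1≤i≤N} w_i(ϑ₂). -/
/-- Relaxation squeezes the weights: for 0 < ϑ₁ ≤ ϑ₂, the largest relaxed
normalized weight w_i(ϑ) = exp(a_i/ϑ)/Σ_j exp(a_j/ϑ) is nonincreasing and the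
smallest is nondecreasing in ϑ. -/
theorem relaxed_weights_squeeze
    (N : ℕ) (hN : 1 ≤ N) (hne : (Finset.univ : Finset (Fin N)).Nonempty)
    (a : Fin N → ℝ) (w : Fin N → ℝ → ℝ)
    (hw : ∀ i ϑ, w i ϑ = Real.exp (a i / ϑ) / ∑ j, Real.exp (a j / ϑ))
    (ϑ₁ ϑ₂ : ℝ) (h₁ : 0 < ϑ₁) (h₁₂ : ϑ₁ ≤ ϑ₂) :
    Finset.univ.sup' hne (fun i => w i ϑ₂) ≤
        Finset.univ.sup' hne (fun i => w i ϑ₁) ∧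
      Finset.univ.inf' hne (fun i => w i ϑ₁) ≤
        Finset.univ.inf' hne (fun i => w i ϑ₂) := by
  have h₂ : 0 < ϑ₂ := h₁.trans_le h₁₂
  have hsum : ∀ ϑ : ℝ, 0 < ∑ j, Real.exp (a j / ϑ) := fun ϑ =>
    Finset.sum_pos (fun j _ => Real.exp_pos _) hne
  have hinv : ϑ₂⁻¹ ≤ ϑ₁⁻¹ := by
    apply inv_anti₀ h₁ h₁₂
  -- comparison of weights within a fixed ϑ
  have hmono : ∀ (ϑ : ℝ), 0 < ϑ → ∀ (i j : Fin N), a i ≤ a j → w i ϑ ≤ w j ϑ := by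
    intro ϑ hϑ i j hij
    rw [hw, hw]
    gcongr

  -- at an argmax, w is nonincreasing in ϑ
  have keymax : ∀ i : Fin N, (∀ j, a j ≤ a i) → w i ϑ₂ ≤ w i ϑ₁ := by
    intro i hi
    rw [hw, hw, div_le_div_iff₀ (hsum ϑ₂) (hsum ϑ₁), Finset.mul_sum,
      Finset.mul_sum]
    apply Finset.sum_le_sum
    intro j _
    rw [← Real.exp_add, ← Real.exp_add]
    apply Real.exp_le_exp.mpr
    rw [div_eq_mul_inv, div_eq_mul_inv, div_eq_mul_inv, div_eq_mul_inv]
    nlinarith [mul_nonneg (sub_nonneg.mpr (hi j)) (sub_nonneg.mpr hinv)]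
  -- at an argmin, w is nondecreasing in ϑ
  have keymin : ∀ i : Fin N, (∀ j, a i ≤ a j) → w i ϑ₁ ≤ w i ϑ₂ := by
    intro i hi
    rw [hw, hw, div_le_div_iff₀ (hsum ϑ₁) (hsum ϑ₂), Finset.mul_sum,
      Finset.mul_sum]
    apply Finset.sum_le_sum
    intro j _
    rw [← Real.exp_add, ← Real.exp_add]
    apply Real.exp_le_exp.mpr
    rw [div_eq_mul_inv, div_eq_mul_inv, div_eq_mul_inv, div_eq_mul_inv]
    nlinarith [mul_nonneg (sub_nonneg.mpr (hi j)) (sub_nonneg.mpr hinv)]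
  obtain ⟨imax, _, himax⟩ := Finset.exists_max_image Finset.univ a hne
  obtain ⟨imin, _, himin⟩ := Finset.exists_min_image Finset.univ a hne
  constructor
  · apply Finset.sup'_le
    intro j _
    calc w j ϑ₂ ≤ w imax ϑ₂ := hmono ϑ₂ h₂ j imax (himax j (Finset.mem_univ j))
      _ ≤ w imax ϑ₁ := keymax imax (fun j => himax j (Finset.mem_univ j))
      _ ≤ _ := Finset.le_sup' (fun i => w i ϑ₁) (Finset.mem_univ imax)
  · apply Finset.le_inf'
    intro j _
    calc Finset.univ.inf' hne (fun i => w i ϑ₁) ≤ w imin ϑ₁ :=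
        Finset.inf'_le (fun i => w i ϑ₁) (Finset.mem_univ imin)
      _ ≤ w imin ϑ₂ := keymin imin (fun j => himin j (Finset.mem_univ j))
      _ ≤ w j ϑ₂ := hmono ϑ₂ h₂ imin j (himin j (Finset.mem_univ j))
end

section
/- The effective sample size is monotone in the scale parameter: for all 0 < ϑ₁ ≤ ϑ₂ one has Σ_{i=1}^N w_i(ϑ₂)² ≤ Σ_{i=1}^N w_i(ϑ₁)², and consequently ESS(ϑ₁) ≤ ESS(ϑ₂), where ESS(ϑ) = (Σ_{i=1}^N w_i(ϑ)²)⁻¹. Hence increasing ϑ always increases (or preserves) the effective sample size, which justifies the dynamic selection strategy for ϑ. -/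
open Real Finset

/-- Weighted AM–GM at three exponential points, scaled by `2 - t`. -/
lemma exp3_aux (t u v w : ℝ) (ht0 : 0 < t) (ht1 : t ≤ 1) :
    (2 - t) * Real.exp (2*t*u + (v + w)) ≤
      t * Real.exp (2*u + (t*v + t*w))
        + (1 - t) * Real.exp (2*v + (t*w + t*u))
        + (1 - t) * Real.exp (2*w + (t*u + t*v)) := by
  have hs : (0:ℝ) < 2 - t := by linarith
  have hsum : t/(2-t) + (1-t)/(2-t) + (1-t)/(2-t) = 1 := by
    field_simp; ring
  have h := Real.geom_mean_le_arith_mean3_weighted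
    (w₁ := t/(2-t)) (w₂ := (1-t)/(2-t)) (w₃ := (1-t)/(2-t))
    (p₁ := Real.exp (2*u + (t*v + t*w))) (p₂ := Real.exp (2*v + (t*w + t*u)))
    (p₃ := Real.exp (2*w + (t*u + t*v)))
    (div_nonneg ht0.le hs.le) (div_nonneg (by linarith) hs.le)
    (div_nonneg (by linarith) hs.le)
    (Real.exp_pos _).le (Real.exp_pos _).le (Real.exp_pos _).le hsum
  rw [← Real.exp_mul, ← Real.exp_mul, ← Real.exp_mul, ← Real.exp_add, ← Real.exp_add] at h
  have harg : (2*u + (t*v + t*w)) * (t/(2-t)) + (2*v + (t*w + t*u)) * ((1-t)/(2-t))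
      + (2*w + (t*u + t*v)) * ((1-t)/(2-t)) = 2*t*u + (v + w) := by
    field_simp; ring
  rw [harg] at h
  have h' := mul_le_mul_of_nonneg_left h hs.le
  calc (2 - t) * Real.exp (2*t*u + (v + w))
      ≤ (2 - t) * (t/(2-t) * Real.exp (2*u + (t*v + t*w))
          + (1-t)/(2-t) * Real.exp (2*v + (t*w + t*u))
          + (1-t)/(2-t) * Real.exp (2*w + (t*u + t*v))) := h'
    _ = _ := by field_simp

/-- Three-variable symmetric inequality. -/
lemma three_var (t u v w : ℝ) (ht0 : 0 < t) (ht1 : t ≤ 1) :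
    Real.exp (2*t*u) * (Real.exp v * Real.exp w)
      + Real.exp (2*t*v) * (Real.exp w * Real.exp u)
      + Real.exp (2*t*w) * (Real.exp u * Real.exp v) ≤
    Real.exp (2*u) * (Real.exp (t*v) * Real.exp (t*w))
      + Real.exp (2*v) * (Real.exp (t*w) * Real.exp (t*u))
      + Real.exp (2*w) * (Real.exp (t*u) * Real.exp (t*v)) := by
  have hs : (0:ℝ) < 2 - t := by linarith
  have h1 := exp3_aux t u v w ht0 ht1
  have h2 := exp3_aux t v w u ht0 ht1
  have h3 := exp3_aux t w u v ht0 ht1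
  simp only [← Real.exp_add]
  have hmul : (2 - t) * (Real.exp (2*t*u + (v + w)) + Real.exp (2*t*v + (w + u))
      + Real.exp (2*t*w + (u + v))) ≤
      (2 - t) * (Real.exp (2*u + (t*v + t*w)) + Real.exp (2*v + (t*w + t*u))
      + Real.exp (2*w + (t*u + t*v))) := by linarith
  exact le_of_mul_le_mul_left hmul hs

lemma cyc_sum {N : ℕ} (H : Fin N → Fin N → Fin N → ℝ) :
    (∑ i, ∑ j, ∑ k, H i j k) = ∑ i, ∑ j, ∑ k, H j k i := by
  calc (∑ i, ∑ j, ∑ k, H i j k)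
      = ∑ i, ∑ k, ∑ j, H i j k := Finset.sum_congr rfl fun _ _ => Finset.sum_comm
    _ = ∑ k, ∑ i, ∑ j, H i j k := Finset.sum_comm

/-- The key sum inequality. -/
lemma sum_step {N : ℕ} (α : Fin N → ℝ) (t : ℝ) (ht0 : 0 < t) (ht1 : t ≤ 1) :
    (∑ i, Real.exp (2*t*α i)) * (∑ i, Real.exp (α i))^2 ≤
      (∑ i, Real.exp (2*α i)) * (∑ i, Real.exp (t*α i))^2 := by
  have expand : ∀ f g : Fin N → ℝ,
      (∑ i, f i) * (∑ i, g i)^2 = ∑ i, ∑ j, ∑ k, f i * (g j * g k) := by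
    intro f g
    calc (∑ i, f i) * (∑ i, g i)^2
        = ∑ i, (f i * ((∑ j, g j) * (∑ k, g k))) := by rw [sq, Finset.sum_mul]
      _ = ∑ i, ∑ j, ∑ k, f i * (g j * g k) := by
          refine Finset.sum_congr rfl fun i _ => ?_
          rw [Finset.sum_mul_sum, Finset.mul_sum]
          exact Finset.sum_congr rfl fun j _ => by rw [Finset.mul_sum]
  rw [expand, expand]
  set F : Fin N → Fin N → Fin N → ℝ :=
    fun i j k => Real.exp (2*t*α i) * (Real.exp (α j) * Real.exp (α k)) with hF
  set G : Fin N → Fin N → Fin N → ℝ :=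
    fun i j k => Real.exp (2*α i) * (Real.exp (t*α j) * Real.exp (t*α k)) with hG
  have key : (∑ i, ∑ j, ∑ k, (F i j k + F j k i + F k i j)) ≤
      (∑ i, ∑ j, ∑ k, (G i j k + G j k i + G k i j)) := by
    refine Finset.sum_le_sum fun i _ => Finset.sum_le_sum fun j _ =>
      Finset.sum_le_sum fun k _ => ?_
    exact three_var t (α i) (α j) (α k) ht0 ht1
  have split : ∀ (H : Fin N → Fin N → Fin N → ℝ),
      (∑ i, ∑ j, ∑ k, (H i j k + H j k i + H k i j))
        = 3 * ∑ i, ∑ j, ∑ k, H i j k := by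
    intro H
    have e1 : (∑ i, ∑ j, ∑ k, H j k i) = ∑ i, ∑ j, ∑ k, H i j k :=
      (cyc_sum H).symm
    have e2 : (∑ i, ∑ j, ∑ k, H k i j) = ∑ i, ∑ j, ∑ k, H i j k := by
      have := cyc_sum (fun i j k => H j k i)
      rw [← this, e1]
    simp only [Finset.sum_add_distrib]
    rw [e1, e2]; ring
  have hF3 := split F
  have hG3 := split G
  rw [hF3, hG3] at key
  linarith

/-- The effective sample size is monotone in the scale parameter: for
0 < ϑ₁ ≤ ϑ₂, Σᵢ wᵢ(ϑ₂)² ≤ Σᵢ wᵢ(ϑ₁)², and hence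
ESS(ϑ₁) = (Σᵢ wᵢ(ϑ₁)²)⁻¹ ≤ (Σᵢ wᵢ(ϑ₂)²)⁻¹ = ESS(ϑ₂), where
w_i(ϑ) = exp(a_i/ϑ)/Σ_j exp(a_j/ϑ). -/
theorem ess_monotone_in_scale
    (N : ℕ) (hN : 1 ≤ N) (a : Fin N → ℝ) (w : Fin N → ℝ → ℝ)
    (hw : ∀ i ϑ, w i ϑ = Real.exp (a i / ϑ) / ∑ j, Real.exp (a j / ϑ))
    (ESS : ℝ → ℝ) (hESS : ∀ ϑ, ESS ϑ = (∑ i, (w i ϑ) ^ 2)⁻¹)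
    (ϑ₁ ϑ₂ : ℝ) (h₁ : 0 < ϑ₁) (h₁₂ : ϑ₁ ≤ ϑ₂) :
    (∑ i, (w i ϑ₂) ^ 2) ≤ (∑ i, (w i ϑ₁) ^ 2) ∧ ESS ϑ₁ ≤ ESS ϑ₂ := by
  have h₂ : 0 < ϑ₂ := lt_of_lt_of_le h₁ h₁₂
  set t : ℝ := ϑ₁ / ϑ₂ with htdef
  have ht0 : 0 < t := div_pos h₁ h₂
  have ht1 : t ≤ 1 := (div_le_one h₂).mpr h₁₂
  set α : Fin N → ℝ := fun i => a i / ϑ₁ with hα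
  have hdiv2 : ∀ i, a i / ϑ₂ = t * α i := by
    intro i; rw [htdef]; simp only [hα]; field_simp
  have hw1 : ∀ i, w i ϑ₁ = Real.exp (α i) / ∑ j, Real.exp (α j) := fun i => hw i ϑ₁
  have hw2 : ∀ i, w i ϑ₂ = Real.exp (t * α i) / ∑ j, Real.exp (t * α j) := by
    intro i
    rw [hw i ϑ₂]
    simp only [hdiv2]
  have hsum1 : (∑ i, (w i ϑ₁) ^ 2)
      = (∑ i, Real.exp (2*α i)) / (∑ j, Real.exp (α j))^2 := by
    rw [Finset.sum_div]
    refine Finset.sum_congr rfl fun i _ => ?_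
    rw [hw1 i, div_pow]
    congr 1
    rw [sq, ← Real.exp_add]; ring_nf
  have hsum2 : (∑ i, (w i ϑ₂) ^ 2)
      = (∑ i, Real.exp (2*t*α i)) / (∑ j, Real.exp (t * α j))^2 := by
    rw [Finset.sum_div]
    refine Finset.sum_congr rfl fun i _ => ?_
    rw [hw2 i, div_pow]
    congr 1
    rw [sq, ← Real.exp_add]; ring_nf
  have hS : (0:ℝ) < ∑ j, Real.exp (α j) :=
    Finset.sum_pos (fun j _ => Real.exp_pos _) ⟨⟨0, hN⟩, Finset.mem_univ _⟩
  have hT : (0:ℝ) < ∑ j, Real.exp (t * α j) :=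
    Finset.sum_pos (fun j _ => Real.exp_pos _) ⟨⟨0, hN⟩, Finset.mem_univ _⟩
  have hmain : (∑ i, (w i ϑ₂) ^ 2) ≤ (∑ i, (w i ϑ₁) ^ 2) := by
    rw [hsum1, hsum2, div_le_div_iff₀ (pow_pos hT 2) (pow_pos hS 2)]
    exact sum_step α t ht0 ht1
  refine ⟨hmain, ?_⟩
  rw [hESS, hESS]
  have hnum : (0:ℝ) < ∑ i, Real.exp (2*t*α i) :=
    Finset.sum_pos (fun j _ => Real.exp_pos _) ⟨⟨0, hN⟩, Finset.mem_univ _⟩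
  have hpos : (0:ℝ) < ∑ i, (w i ϑ₂) ^ 2 := by
    rw [hsum2]; exact div_pos hnum (pow_pos hT 2)
  exact inv_anti₀ hpos hmain
end
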